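/- Let B and D be two orthogonal projectors on ℝ^N with ‖B D^c‖₂ < 1, where D^c := I − D and B^c := I − B. Let ψ_1, …, ψ_N be an orthonormal basis of ℝ^N of eigenvectors of B·D·B with B·D·B ψ_i = σ_i² ψ_i. For an arbitrary (not necessarily bandlimited) signal f ∈ ℝ^N, the reconstruction from its samples, f̃ := Σ_{i : σ_i² ≠ 0} (1/σ_i²) ⟨Df, ψ_i⟩ ψ_i, satisfies f̃ = B f + Σ_{i : σ_i² ≠ 0} (1/σ_i²) ⟨D B^c f, ψ_i⟩ ψ_i; that is, it recovers the in-band part Bf exactly plus an aliasing term generated by the out-of-band component B^c f. -/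

import Mathlib

/-!
Eigenvectors of `B D B` with `σ² ≠ 0` lie in the range of `B`, and those with `σ² = 0` lie
in its kernel: for such `ψ`, `x = B ψ` satisfies `‖D x‖² = ⟨ψ, B D B ψ⟩ = 0`, so `x` is a
fixed point of the strict contraction `B (I - D)`. Hence the `ψ i` with `σ² i ≠ 0` form an
orthonormal basis of the range of `B`, and for them
`⟨D B f, ψ i⟩ = ⟨f, B D B ψ i⟩ = σ² i ⟨f, ψ i⟩`. Splitting `D f = D B f + D B^c f`, the first
part of the reconstruction is therefore `∑ ⟨f, ψ i⟩ ψ i = B f`.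
-/

open Matrix

/-- The spectral norm of a real `N × N` matrix: the operator norm of the induced
linear map on `ℝ^N` with the Euclidean norm. -/
noncomputable def matrixSpectralNorm {N : ℕ} (M : Matrix (Fin N) (Fin N) ℝ) : ℝ :=
  ‖Matrix.toEuclideanCLM (𝕜 := ℝ) M‖

namespace Matrix

variable {n : Type*} [Fintype n]

theorem IsSymm.mulVec_dotProduct {R : Type*} [CommSemiring R] {M : Matrix n n R} (hM : M.IsSymm)
    (x y : n → R) : M *ᵥ x ⬝ᵥ y = x ⬝ᵥ M *ᵥ y := by
  rw [dotProduct_mulVec, ← mulVec_transpose, hM]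

theorem sum_dotProduct_smul_of_orthonormal {R : Type*} [CommRing R] [DecidableEq n]
    (ψ : n → n → R) (horth : ∀ i j, ψ i ⬝ᵥ ψ j = if i = j then (1 : R) else 0) (w : n → R) :
    ∑ i, (w ⬝ᵥ ψ i) • ψ i = w := by
  have hrows : of ψ * (of ψ)ᵀ = 1 := by
    ext i j
    exact horth i j
  have hcols : (of ψ)ᵀ * of ψ = 1 := mul_eq_one_comm.mp hrows
  calc ∑ i, (w ⬝ᵥ ψ i) • ψ i = (of ψ *ᵥ w) ᵥ* of ψ := by
        simp only [vecMul_eq_sum, mulVec, dotProduct_comm w]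
        rfl
    _ = ((of ψ)ᵀ * of ψ) *ᵥ w := by rw [← mulVec_mulVec, mulVec_transpose]
    _ = w := by rw [hcols, one_mulVec]

theorem mulVec_eq_sum_filter_of_orthonormal {R : Type*} [CommRing R] [DecidableEq n]
    {B : Matrix n n R} (hB : B.IsSymm) {ψ : n → n → R}
    (horth : ∀ i j, ψ i ⬝ᵥ ψ j = if i = j then (1 : R) else 0) (p : n → Prop) [DecidablePred p]
    (hp : ∀ i, p i → B *ᵥ ψ i = ψ i) (hnp : ∀ i, ¬ p i → B *ᵥ ψ i = 0) (f : n → R) :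
    B *ᵥ f = ∑ i ∈ Finset.univ.filter p, (f ⬝ᵥ ψ i) • ψ i := by
  conv_lhs => rw [← sum_dotProduct_smul_of_orthonormal ψ horth (B *ᵥ f)]
  rw [Finset.sum_filter]
  refine Finset.sum_congr rfl fun i _ => ?_
  by_cases hi : p i
  · rw [if_pos hi, hB.mulVec_dotProduct, hp i hi]
  · rw [if_neg hi, hB.mulVec_dotProduct, hnp i hi, dotProduct_zero, zero_smul]

theorem mulVec_eq_self_of_mul_mulVec_eq_smul {K : Type*} [Field K] {B X : Matrix n n K}
    (hB : B * B = B) {v : n → K} {s : K} (hv : (B * X) *ᵥ v = s • v) (hs : s ≠ 0) :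
    B *ᵥ v = v := by
  have hBv : B *ᵥ (s • v) = s • v := by
    rw [← hv, mulVec_mulVec, ← Matrix.mul_assoc, hB]
  rw [mulVec_smul] at hBv
  exact smul_right_injective _ hs hBv

theorem mulVec_eq_zero_of_dotProduct_mulVec_eq_zero {R : Type*} [CommRing R] [LinearOrder R]
    [IsStrictOrderedRing R] {D : Matrix n n R} (hD : D.IsSymm) (hDD : D * D = D) {x : n → R}
    (hx : x ⬝ᵥ D *ᵥ x = 0) : D *ᵥ x = 0 := by
  rw [← dotProduct_self_eq_zero, hD.mulVec_dotProduct, mulVec_mulVec, hDD, hx]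

end Matrix

theorem eq_zero_of_mulVec_eq_self_of_matrixSpectralNorm_lt_one {N : ℕ}
    {M : Matrix (Fin N) (Fin N) ℝ} (hM : matrixSpectralNorm M < 1) {v : Fin N → ℝ}
    (hv : M *ᵥ v = v) : v = 0 := by
  have hle : ‖WithLp.toLp 2 v‖ ≤ matrixSpectralNorm M * ‖WithLp.toLp 2 v‖ := by
    simpa [matrixSpectralNorm, hv] using (toEuclideanCLM (𝕜 := ℝ) M).le_opNorm (WithLp.toLp 2 v)
  have hzero : ‖WithLp.toLp 2 v‖ = 0 := by nlinarith [norm_nonneg (WithLp.toLp 2 v)]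
  simpa using hzero

theorem mulVec_eq_zero_of_mul_mul_mulVec_eq_zero {N : ℕ} {B D : Matrix (Fin N) (Fin N) ℝ}
    (hB : B.IsSymm) (hD : D.IsSymm) (hBB : B * B = B) (hDD : D * D = D)
    (hnorm : matrixSpectralNorm (B * (1 - D)) < 1) {v : Fin N → ℝ}
    (hv : (B * D * B) *ᵥ v = 0) : B *ᵥ v = 0 := by
  have hDBv : D *ᵥ (B *ᵥ v) = 0 := by
    refine mulVec_eq_zero_of_dotProduct_mulVec_eq_zero hD hDD ?_
    rw [hB.mulVec_dotProduct, mulVec_mulVec, mulVec_mulVec, hv, dotProduct_zero]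
  refine eq_zero_of_mulVec_eq_self_of_matrixSpectralNorm_lt_one hnorm ?_
  rw [← mulVec_mulVec, sub_mulVec, one_mulVec, hDBv, sub_zero, mulVec_mulVec, hBB]

/-- Let `B` and `D` be orthogonal projectors on `ℝ^N` with `‖B D^c‖₂ < 1`, where
`D^c := I − D`, `B^c := I − B`, and let `ψ 1, …, ψ N` be an orthonormal basis of
eigenvectors of `B·D·B` with `B·D·B ψ i = σ² i • ψ i`. For an arbitrary signal `f`,
the reconstruction from its samples `f̃ := Σ_{i : σ² i ≠ 0} (1/σ² i) ⟨Df, ψ i⟩ ψ i`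
satisfies `f̃ = B f + Σ_{i : σ² i ≠ 0} (1/σ² i) ⟨D B^c f, ψ i⟩ ψ i`: it recovers the
in-band part `Bf` exactly, plus an aliasing term generated by the out-of-band
component `B^c f`. -/
theorem reconstruction_of_non_bandlimited_signal
    {N : ℕ} (B D : Matrix (Fin N) (Fin N) ℝ)
    (hBsym : B.transpose = B) (hDsym : D.transpose = D)
    (hBidem : B * B = B) (hDidem : D * D = D)
    (hnorm : matrixSpectralNorm (B * (1 - D)) < 1)
    (ψ : Fin N → (Fin N → ℝ)) (σsq : Fin N → ℝ)
    (horth : ∀ i j, ψ i ⬝ᵥ ψ j = if i = j then (1 : ℝ) else 0)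
    (heig : ∀ i, (B * D * B).mulVec (ψ i) = σsq i • ψ i)
    (f : Fin N → ℝ) :
    ∑ i ∈ Finset.univ.filter (fun i => σsq i ≠ 0),
        ((D.mulVec f ⬝ᵥ ψ i) / σsq i) • ψ i
      = B.mulVec f +
        ∑ i ∈ Finset.univ.filter (fun i => σsq i ≠ 0),
          ((D.mulVec ((1 - B).mulVec f) ⬝ᵥ ψ i) / σsq i) • ψ i := by
  have hin : ∀ i, σsq i ≠ 0 → B *ᵥ ψ i = ψ i := fun i hi =>
    mulVec_eq_self_of_mul_mulVec_eq_smul (X := D * B) hBidem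
      (by rw [← Matrix.mul_assoc]; exact heig i) hi
  have hout : ∀ i, ¬σsq i ≠ 0 → B *ᵥ ψ i = 0 := fun i hi =>
    mulVec_eq_zero_of_mul_mul_mulVec_eq_zero hBsym hDsym hBidem hDidem hnorm
      (by rw [heig i, not_not.mp hi, zero_smul])
  have hsample : ∀ i, σsq i ≠ 0 → D *ᵥ (B *ᵥ f) ⬝ᵥ ψ i = σsq i * (f ⬝ᵥ ψ i) := by
    intro i hi
    calc D *ᵥ (B *ᵥ f) ⬝ᵥ ψ i = f ⬝ᵥ B *ᵥ (D *ᵥ (B *ᵥ ψ i)) := by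
          rw [hin i hi, IsSymm.mulVec_dotProduct hDsym, IsSymm.mulVec_dotProduct hBsym]
      _ = σsq i * (f ⬝ᵥ ψ i) := by
          rw [mulVec_mulVec, mulVec_mulVec, heig i, dotProduct_smul, smul_eq_mul]
  have hsplit : D *ᵥ f = D *ᵥ (B *ᵥ f) + D *ᵥ ((1 - B) *ᵥ f) := by
    rw [← mulVec_add, sub_mulVec, one_mulVec, add_sub_cancel]
  rw [mulVec_eq_sum_filter_of_orthonormal hBsym horth _ hin hout f, ← Finset.sum_add_distrib]
  refine Finset.sum_congr rfl fun i hmem => ?_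
  have hi : σsq i ≠ 0 := (Finset.mem_filter.mp hmem).2
  rw [hsplit, add_dotProduct, add_div, add_smul, hsample i hi, mul_div_cancel_left₀ _ hi]
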